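/- arXiv:2507.02298 — 3 statements merged into one kernel-verified Lean document; each statement's English description precedes it below -/
import Mathlib

section
/- Let μ be a probability measure on ℝ with compact support, let r⁺ := sup supp μ, and suppose ζ₀ > r⁺ satisfies ∫ (v − ζ₀)⁻² dμ(v) > 1. Then there exists a unique ζ₊ > ζ₀ such that ∫ (v − ζ₊)⁻² dμ(v) = 1. -/
open MeasureTheory Filter
open scoped Topology

/-- The (topological) support of a measure on `ℝ`: the set of points all of whose
neighborhoods have positive measure. -/
def measureSupport (μ : Measure ℝ) : Set ℝ := {x : ℝ | ∀ U ∈ 𝓝 x, 0 < μ U}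

lemma measureSupport_compl_null (μ : Measure ℝ) : μ (measureSupport μ)ᶜ = 0 := by
  apply measure_null_of_locally_null
  intro x hx
  simp only [measureSupport, Set.mem_compl_iff, Set.mem_setOf_eq, not_forall] at hx
  obtain ⟨U, hU, hUpos⟩ := hx
  exact ⟨U, nhdsWithin_le_nhds hU, by simpa using hUpos⟩

lemma ae_le_sSup (μ : Measure ℝ) [IsProbabilityMeasure μ]
    (hcpt : IsCompact (measureSupport μ)) :
    ∀ᵐ v ∂μ, v ≤ sSup (measureSupport μ) := by
  have hne : (measureSupport μ).Nonempty := by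
    by_contra h
    rw [Set.not_nonempty_iff_eq_empty] at h
    have := measureSupport_compl_null μ
    rw [h, Set.compl_empty] at this
    simp [measure_univ] at this
  have hbd : BddAbove (measureSupport μ) := hcpt.bddAbove
  have hmem : ∀ᵐ v ∂μ, v ∈ measureSupport μ :=
    ae_iff.2 (by simpa [Set.compl_def] using measureSupport_compl_null μ)
  filter_upwards [hmem] with v hv
  exact le_csSup hbd hv

namespace Stmt6Aux

variable (μ : Measure ℝ)

noncomputable def F (ζ : ℝ) : ℝ := ∫ v, ((v - ζ) ^ 2)⁻¹ ∂μ

lemma meas (ζ : ℝ) : AEStronglyMeasurable (fun v : ℝ => ((v - ζ) ^ 2)⁻¹) μ :=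
  (((measurable_id.sub_const ζ).pow_const 2).inv).aestronglyMeasurable

variable [IsProbabilityMeasure μ] (hcpt : IsCompact (measureSupport μ))

lemma bound_ae {r ζ : ℝ} (hr : ∀ᵐ v ∂μ, v ≤ r) (hζ : r < ζ) :
    ∀ᵐ v ∂μ, ‖((v - ζ) ^ 2)⁻¹‖ ≤ ((ζ - r) ^ 2)⁻¹ := by
  filter_upwards [hr] with v hv
  have h1 : (0:ℝ) < ζ - r := by linarith
  have h2 : ζ - r ≤ ζ - v := by linarith
  have hsq : (ζ - r) ^ 2 ≤ (v - ζ) ^ 2 := by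
    rw [show (v - ζ)^2 = (ζ - v)^2 by ring]
    exact pow_le_pow_left₀ h1.le h2 2
  rw [Real.norm_eq_abs, abs_of_nonneg (inv_nonneg.2 (sq_nonneg _))]
  exact inv_anti₀ (by positivity) hsq

lemma integrable {r ζ : ℝ} (hr : ∀ᵐ v ∂μ, v ≤ r) (hζ : r < ζ) :
    Integrable (fun v : ℝ => ((v - ζ) ^ 2)⁻¹) μ :=
  Integrable.mono' (integrable_const _) (meas μ ζ) (bound_ae μ hr hζ)

lemma F_le {r ζ : ℝ} (hr : ∀ᵐ v ∂μ, v ≤ r) (hζ : r < ζ) :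
    F μ ζ ≤ ((ζ - r) ^ 2)⁻¹ := by
  calc F μ ζ ≤ ∫ _v, ((ζ - r) ^ 2)⁻¹ ∂μ := by
        refine integral_mono_ae (integrable μ hr hζ) (integrable_const _) ?_
        filter_upwards [bound_ae μ hr hζ] with v hv
        rw [Real.norm_eq_abs] at hv
        exact (le_abs_self _).trans hv
    _ = ((ζ - r) ^ 2)⁻¹ := by simp

lemma F_strictAnti {r a b : ℝ} (hr : ∀ᵐ v ∂μ, v ≤ r) (ha : r < a) (hab : a < b) :
    F μ b < F μ a := by
  have hpos : ∀ᵐ v ∂μ, 0 < ((v - a) ^ 2)⁻¹ - ((v - b) ^ 2)⁻¹ := by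
    filter_upwards [hr] with v hv
    have h1 : (0:ℝ) < a - v := by linarith
    have h2 : a - v < b - v := by linarith
    have hsq : (v - a) ^ 2 < (v - b) ^ 2 := by
      rw [show (v - a)^2 = (a - v)^2 by ring, show (v - b)^2 = (b - v)^2 by ring]
      exact pow_lt_pow_left₀ h2 h1.le (by norm_num)
    have hpos2 : (0:ℝ) < (v - a) ^ 2 := by
      rw [show (v - a)^2 = (a - v)^2 by ring]; positivity
    have := inv_strictAnti₀ hpos2 hsq
    linarith
  have hia := integrable μ hr ha
  have hib := integrable μ hr (ha.trans hab)
  have hsub : F μ a - F μ b = ∫ v, (((v - a) ^ 2)⁻¹ - ((v - b) ^ 2)⁻¹) ∂μ :=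
    (integral_sub hia hib).symm
  have hle : 0 ≤ ∫ v, (((v - a) ^ 2)⁻¹ - ((v - b) ^ 2)⁻¹) ∂μ :=
    integral_nonneg_of_ae (hpos.mono fun v h => h.le)
  have hne : (∫ v, (((v - a) ^ 2)⁻¹ - ((v - b) ^ 2)⁻¹) ∂μ) ≠ 0 := by
    intro h0
    have := (integral_eq_zero_iff_of_nonneg_ae (hpos.mono fun v h => h.le)
      (hia.sub hib)).1 h0
    have : ∀ᵐ v ∂μ, False := by
      filter_upwards [this, hpos] with v h1 h2
      rw [Pi.zero_apply] at h1; linarith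
    exact (IsProbabilityMeasure.ne_zero μ) (by simpa using this)
  have : 0 < F μ a - F μ b := hsub ▸ lt_of_le_of_ne hle (Ne.symm hne)
  linarith

lemma F_continuousAt {r : ℝ} (hr : ∀ᵐ v ∂μ, v ≤ r) {ζ : ℝ} (hζ : r < ζ) :
    ContinuousAt (F μ) ζ := by
  set δ := (ζ - r) / 2 with hδ
  have hδpos : 0 < δ := by simp [hδ]; linarith
  apply continuousAt_of_dominated (bound := fun _ => (δ ^ 2)⁻¹)
    (Eventually.of_forall fun x => meas μ x)
  · filter_upwards [Metric.ball_mem_nhds ζ hδpos] with x hx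
    have hx' : r + δ < x := by
      rw [Metric.mem_ball, Real.dist_eq, abs_lt] at hx
      simp only [hδ] at *; linarith
    filter_upwards [bound_ae μ hr (show r < x by linarith)] with v hv
    refine hv.trans (inv_anti₀ (by positivity) ?_)
    have : δ ≤ x - r := by linarith
    exact pow_le_pow_left₀ hδpos.le this 2
  · exact integrable_const _
  · filter_upwards [hr] with v hv
    have hne : (v - ζ) ^ 2 ≠ 0 := by
      have : v - ζ ≠ 0 := by
        intro h; rw [sub_eq_zero] at h; rw [h] at hv; linarith
      positivity
    exact (((continuous_const.sub continuous_id).pow 2).continuousAt).inv₀ hne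

end Stmt6Aux

/-- For a compactly supported probability measure `μ` on `ℝ` with
`r⁺ = sup supp μ`, if `ζ₀ > r⁺` satisfies `∫ (v − ζ₀)⁻² dμ(v) > 1`, then there exists a
unique `ζ₊ > ζ₀` with `∫ (v − ζ₊)⁻² dμ(v) = 1`. -/
theorem stmt_6 (μ : Measure ℝ) [IsProbabilityMeasure μ]
    (hcpt : IsCompact (measureSupport μ))
    (ζ₀ : ℝ) (hζ₀ : sSup (measureSupport μ) < ζ₀)
    (h1 : 1 < ∫ v, ((v - ζ₀) ^ 2)⁻¹ ∂μ) :
    ∃! ζ : ℝ, ζ₀ < ζ ∧ (∫ v, ((v - ζ) ^ 2)⁻¹ ∂μ) = 1 := by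
  set r := sSup (measureSupport μ) with hrdef
  have hr : ∀ᵐ v ∂μ, v ≤ r := ae_le_sSup μ hcpt
  have h1' : 1 < Stmt6Aux.F μ ζ₀ := h1
  -- choose M large
  set M := max (ζ₀ + 1) (r + 2) with hM
  have hζ₀M : ζ₀ < M := lt_of_lt_of_le (by linarith) (le_max_left _ _)
  have hrM : r + 2 ≤ M := le_max_right _ _
  have hFM : Stmt6Aux.F μ M < 1 := by
    have := Stmt6Aux.F_le μ hr (show r < M by linarith)
    have h2 : (2:ℝ) ≤ M - r := by linarith
    have : ((M - r) ^ 2)⁻¹ ≤ (4:ℝ)⁻¹ := by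
      apply inv_anti₀ (by norm_num)
      nlinarith
    linarith [Stmt6Aux.F_le μ hr (show r < M by linarith)]
  have hcont : ContinuousOn (Stmt6Aux.F μ) (Set.Icc ζ₀ M) := fun x hx =>
    (Stmt6Aux.F_continuousAt μ hr (lt_of_lt_of_le hζ₀ hx.1)).continuousWithinAt
  have h1mem : (1:ℝ) ∈ Set.Icc (Stmt6Aux.F μ M) (Stmt6Aux.F μ ζ₀) :=
    ⟨hFM.le, h1'.le⟩
  obtain ⟨ζ, hζmem, hζeq⟩ := intermediate_value_Icc' hζ₀M.le hcont h1mem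
  have hζgt : ζ₀ < ζ := by
    rcases eq_or_lt_of_le hζmem.1 with h | h
    · exfalso; rw [← h] at hζeq; rw [hζeq] at h1'; exact lt_irrefl _ h1'
    · exact h
  refine ⟨ζ, ⟨hζgt, hζeq⟩, ?_⟩
  rintro ζ' ⟨hζ'gt, hζ'eq⟩
  by_contra hne
  rcases lt_or_gt_of_ne hne with h | h
  · have := Stmt6Aux.F_strictAnti μ hr (lt_trans hζ₀ hζ'gt) h
    rw [show Stmt6Aux.F μ ζ = 1 from hζeq, show Stmt6Aux.F μ ζ' = 1 from hζ'eq] at this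
    exact lt_irrefl _ this
  · have := Stmt6Aux.F_strictAnti μ hr (lt_trans hζ₀ hζgt) h
    rw [show Stmt6Aux.F μ ζ = 1 from hζeq, show Stmt6Aux.F μ ζ' = 1 from hζ'eq] at this
    exact lt_irrefl _ this
end

section
/- Let N be a positive integer, A an N×N complex Hermitian matrix, z ∈ ℂ with Im z > 0, and G = (A − zI)⁻¹. Fix an index k and let G^{(k)} = (π_k(A) − zI)⁻¹. Then for all indices i, j with i ≠ k and j ≠ k, G_{ij} = G^{(k)}_{ij} + G_{ik} G_{kj} / G_{kk} (note G_{kk} ≠ 0 since Im G_{kk} > 0). -/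
/-!
With `B = A - z` and `v = B⁻¹ eₖ`, one has `G_{kk} = ⟪B v, v⟫ = ⟪v, A v⟫ - z̄ ‖v‖²`; since
`⟪v, A v⟫` is real, `Im G_{kk} = Im z ‖v‖² > 0`. The same computation shows that `B` has trivial
kernel.

For the formula, `S = G - G_{kk}⁻¹ G Eₖₖ G` has vanishing `k`-th row and column, and `B S` agrees
with the identity off the `k`-th row. Hence `S - z⁻¹ Eₖₖ` is a right inverse of `π_k(A) - z`, and
its entries away from row and column `k` are those of `S`.
-/

open Matrix

namespace Matrix

section Semiring

variable {α l m o p : Type*} [NonUnitalNonAssocSemiring α] [Fintype m] [Fintype o]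
  [DecidableEq m] [DecidableEq o]

lemma mul_single_mul_apply (M : Matrix l m α) (N : Matrix o p α) (a : m) (b : o) (c : α)
    (i : l) (j : p) : (M * single a b c * N) i j = M i a * c * N b j := by
  rw [mul_apply, Finset.sum_eq_single b
    (fun x _ hx => by rw [mul_single_apply_of_ne _ _ _ _ _ hx, zero_mul]) (by simp),
    mul_single_apply_same]

end Semiring

section Field

variable {K n : Type*} [Field K] [Fintype n] [DecidableEq n]

lemma inv_apply_eq_sub_of_isolated {B B' : Matrix n n K} (hB : IsUnit B.det) {k : n}
    (hkk : B⁻¹ k k ≠ 0) (hrow : ∀ j ≠ k, B' k j = 0) (hcol : ∀ i ≠ k, B' i k = 0)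
    (hd : B' k k ≠ 0) (hoff : ∀ i ≠ k, ∀ j ≠ k, B' i j = B i j) :
    ∀ i ≠ k, ∀ j ≠ k, B'⁻¹ i j = B⁻¹ i j - B⁻¹ i k * B⁻¹ k j / B⁻¹ k k := by
  have hBG : B * B⁻¹ = 1 := mul_nonsing_inv B hB
  generalize B⁻¹ = G at hkk hBG ⊢
  obtain ⟨S, hSdef⟩ : ∃ S, S = G - (G k k)⁻¹ • (G * single k k 1 * G) := ⟨_, rfl⟩
  have hS : ∀ i j, S i j = G i j - G i k * G k j / G k k := fun i j => by
    rw [hSdef, sub_apply, smul_apply, mul_single_mul_apply, smul_eq_mul, mul_one,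
      div_eq_inv_mul, mul_comm (G k k)⁻¹]
  have hS_row : ∀ j, S k j = 0 := fun j => by
    rw [hS]; field_simp; ring
  have hBS : B * S = 1 - (G k k)⁻¹ • (single k k 1 * G) := by
    rw [hSdef, mul_sub, mul_smul_comm, ← mul_assoc, ← mul_assoc, hBG, one_mul]
  have hinv : B' * (S + single k k (B' k k)⁻¹) = 1 := by
    ext i j
    by_cases hik : i = k
    · subst hik
      rw [mul_apply, Finset.sum_eq_single i (fun x _ hx => by rw [hrow x hx, zero_mul])
        (by simp)]
      simp [hS_row, single_apply, one_apply, hd]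
    · have hrow_i : (B' * (S + single k k (B' k k)⁻¹)) i j = (B * S) i j := by
        rw [mul_apply, mul_apply]
        refine Finset.sum_congr rfl fun x _ => ?_
        by_cases hxk : x = k
        · rw [hxk, hcol i hik, hS_row, zero_mul, mul_zero]
        · simp [hoff i hik x hxk, Ne.symm hxk]
      rw [hrow_i, hBS]
      simp [hik]
  intro i hi j _
  simp [inv_eq_right_inv hinv, hS, hi.symm]

end Field

section RCLike

variable {𝕜 n : Type*} [RCLike 𝕜] [Fintype n]

lemma re_dotProduct_star_self_pos {v : n → 𝕜} (hv : v ≠ 0) : 0 < RCLike.re (star v ⬝ᵥ v) := by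
  open scoped ComplexOrder in
  exact (RCLike.pos_iff.mp (dotProduct_star_self_pos_iff.mpr hv)).1

variable [DecidableEq n] {A : Matrix n n 𝕜}

lemma IsHermitian.im_star_dotProduct_sub_smul_one_mulVec (hA : A.IsHermitian) (z : 𝕜)
    (v : n → 𝕜) :
    RCLike.im (star v ⬝ᵥ (A - z • 1) *ᵥ v) = -(RCLike.im z * RCLike.re (star v ⬝ᵥ v)) := by
  have hv : RCLike.im (star v ⬝ᵥ v) = 0 := by
    simpa using (isHermitian_one (n := n) (α := 𝕜)).im_star_dotProduct_mulVec_self v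
  rw [sub_mulVec, smul_mulVec, one_mulVec, dotProduct_sub, dotProduct_smul, smul_eq_mul,
    map_sub, hA.im_star_dotProduct_mulVec_self, RCLike.mul_im, hv]
  ring

lemma IsHermitian.isUnit_det_sub_smul_one (hA : A.IsHermitian) {z : 𝕜} (hz : RCLike.im z ≠ 0) :
    IsUnit (A - z • 1).det := by
  rw [isUnit_iff_ne_zero]
  intro hdet
  obtain ⟨v, hv, hAv⟩ := exists_mulVec_eq_zero_iff.mpr hdet
  have him := hA.im_star_dotProduct_sub_smul_one_mulVec z v
  rw [hAv, dotProduct_zero, map_zero, zero_eq_neg] at him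
  exact hz ((mul_eq_zero.mp him).resolve_right (re_dotProduct_star_self_pos hv).ne')

lemma IsHermitian.im_inv_sub_smul_one_apply_self_pos (hA : A.IsHermitian) {z : 𝕜}
    (hz : 0 < RCLike.im z) (k : n) : 0 < RCLike.im ((A - z • 1)⁻¹ k k) := by
  set B := A - z • 1
  set v := B⁻¹ *ᵥ Pi.single k 1
  have hBv : B *ᵥ v = Pi.single k 1 := by
    rw [mulVec_mulVec, mul_nonsing_inv _ (hA.isUnit_det_sub_smul_one hz.ne'), one_mulVec]
  have hv : v ≠ 0 := by
    rintro h
    simpa [h] using congrFun hBv k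
  have hBH : Bᴴ = A - star z • 1 := by
    rw [conjTranspose_sub, hA.eq, conjTranspose_smul, conjTranspose_one]
  have hGkk : B⁻¹ k k = star v ⬝ᵥ Bᴴ *ᵥ v := by
    rw [dotProduct_mulVec, ← star_mulVec, hBv, Pi.star_single, star_one, single_dotProduct,
      one_mul]
    simp [v]
  rw [hGkk, hBH, hA.im_star_dotProduct_sub_smul_one_mulVec, RCLike.star_def, RCLike.conj_im,
    neg_mul, neg_neg]
  exact mul_pos hz (re_dotProduct_star_self_pos hv)

end RCLike

end Matrix

theorem stmt_10_general (N : ℕ) (A : Matrix (Fin N) (Fin N) ℂ)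
    (hA : A.IsHermitian) (z : ℂ) (hz : 0 < z.im) (k : Fin N) :
    let G := (A - z • (1 : Matrix (Fin N) (Fin N) ℂ))⁻¹
    let Ak : Matrix (Fin N) (Fin N) ℂ := fun x y => if x = k ∨ y = k then 0 else A x y
    let Gk := (Ak - z • (1 : Matrix (Fin N) (Fin N) ℂ))⁻¹
    G k k ≠ 0 ∧
      ∀ i j : Fin N, i ≠ k → j ≠ k → G i j = Gk i j + G i k * G k j / G k k := by
  intro G Ak Gk
  have hGkk : G k k ≠ 0 := fun h => by
    simpa [G, h] using hA.im_inv_sub_smul_one_apply_self_pos hz k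
  refine ⟨hGkk, fun i j hi hj => ?_⟩
  have hAk : ∀ x y, (Ak - z • 1) x y =
      (if x = k ∨ y = k then 0 else A x y) - z * (1 : Matrix (Fin N) (Fin N) ℂ) x y :=
    fun _ _ => rfl
  have hz0 : z ≠ 0 := fun h => hz.ne' (by simp [h])
  have hGk : Gk i j = G i j - G i k * G k j / G k k :=
    inv_apply_eq_sub_of_isolated (hA.isUnit_det_sub_smul_one hz.ne') hGkk
      (fun j hj => by simp [hAk, one_apply, hj.symm]) (fun i hi => by simp [hAk, one_apply, hi])
      (by simpa [hAk] using hz0) (fun i hi j hj => by simp [hAk, hi, hj]) i hi j hj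
  rw [hGk]
  ring

/-- With `G = (A − zI)⁻¹` and `G⁽ᵏ⁾ = (π_k(A) − zI)⁻¹`, where `π_k(A)`
zeroes the `k`-th row and column of `A`, one has `G_{kk} ≠ 0` and, for all `i ≠ k`, `j ≠ k`,
`G_{ij} = G⁽ᵏ⁾_{ij} + G_{ik} G_{kj} / G_{kk}`. -/
theorem stmt_10 (N : ℕ) (hN : 0 < N) (A : Matrix (Fin N) (Fin N) ℂ)
    (hA : A.IsHermitian) (z : ℂ) (hz : 0 < z.im) (k : Fin N) :
    let G := (A - z • (1 : Matrix (Fin N) (Fin N) ℂ))⁻¹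
    let Ak : Matrix (Fin N) (Fin N) ℂ := fun x y => if x = k ∨ y = k then 0 else A x y
    let Gk := (Ak - z • (1 : Matrix (Fin N) (Fin N) ℂ))⁻¹
    G k k ≠ 0 ∧
      ∀ i j : Fin N, i ≠ k → j ≠ k → G i j = Gk i j + G i k * G k j / G k k :=
  stmt_10_general N A hA z hz k
end

section
/- Let N be a positive integer, A an N×N complex Hermitian matrix, z ∈ ℂ with Im z > 0, and G = (A − zI)⁻¹. Fix indices i ≠ j, let G^{(i)} = (π_i(A) − zI)⁻¹ and G^{(ij)} = (π_i(π_j(A)) − zI)⁻¹. Then G_{ij} = −G_{ii} G^{(i)}_{jj} ( A_{ij} − Σ_{k∉{i,j}} Σ_{l∉{i,j}} A_{ik} G^{(ij)}_{kl} A_{lj} ). -/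
/-! The second resolvent identity `G - G⁽ˢ⁾ = G (π_s A - A) G⁽ˢ⁾` does all the work. The
perturbation `π_s A - A` lives on row and column `s`, while row and column `s` of `G⁽ˢ⁾`
vanish off the diagonal, so the `(s, t)` entry of the identity collapses to
`G_{st} = -G_{ss} ∑_{k ≠ s} A_{sk} G⁽ˢ⁾_{kt}`. Expanding `G_{ij}` this way in row `i`, and
then each `G⁽ⁱ⁾_{kj}` in column `j` with `π_i A` in place of `A`, gives the formula. -/

open Finset

namespace Matrix

variable {n : Type*} [DecidableEq n]

/-- The paper's `π_s(B)`. -/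
def zeroRowCol {α : Type*} [Zero α] (s : n) (B : Matrix n n α) : Matrix n n α :=
  fun x y => if x = s ∨ y = s then 0 else B x y

section Zero

variable {α : Type*} [Zero α]

@[simp]
lemma zeroRowCol_apply (s : n) (B : Matrix n n α) (x y : n) :
    zeroRowCol s B x y = if x = s ∨ y = s then 0 else B x y := rfl

lemma zeroRowCol_comm (s t : n) (B : Matrix n n α) :
    zeroRowCol s (zeroRowCol t B) = zeroRowCol t (zeroRowCol s B) := by
  ext x y
  simp only [zeroRowCol_apply]
  split_ifs <;> tauto

lemma transpose_zeroRowCol (s : n) (B : Matrix n n α) :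
    (zeroRowCol s B)ᵀ = zeroRowCol s Bᵀ := by
  ext x y
  simp [or_comm]

end Zero

lemma IsHermitian.zeroRowCol {α : Type*} [AddMonoid α] [StarAddMonoid α] {B : Matrix n n α}
    (hB : B.IsHermitian) (s : n) : (B.zeroRowCol s).IsHermitian := by
  refine IsHermitian.ext fun x y => ?_
  simp only [zeroRowCol_apply, or_comm (a := x = s), apply_ite star, star_zero, hB.apply]

variable {K : Type*} [Field K]

lemma zeroRowCol_sub_smul_one_row (s : n) (B : Matrix n n K) (z : K) :
    (zeroRowCol s B - z • 1) s = Pi.single s (-z) := by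
  ext y
  by_cases hy : y = s
  · subst hy; simp
  · simp [hy, Ne.symm hy]

variable [Fintype n]

-- No invertibility is needed: a singular `M` has `M⁻¹ = 0`.
lemma inv_apply_eq_zero_of_row_eq_single (M : Matrix n n K) {s t : n} {c : K}
    (hrow : M s = Pi.single s c) (hts : t ≠ s) : M⁻¹ s t = 0 := by
  by_cases hM : IsUnit M.det
  · have hc : c ≠ 0 := by
      rintro rfl
      exact hM.ne_zero (det_eq_zero_of_row_eq_zero s fun y => by simp [hrow])
    have h := congrFun₂ (mul_nonsing_inv M hM) s t
    rw [mul_apply, hrow, one_apply_ne hts.symm] at h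
    simpa [Pi.single_apply, hc] using h
  · simp [nonsing_inv_apply_not_isUnit M hM]

lemma inv_zeroRowCol_sub_smul_one_apply_left (B : Matrix n n K) (z : K) {s t : n}
    (hts : t ≠ s) : (zeroRowCol s B - z • 1)⁻¹ s t = 0 :=
  inv_apply_eq_zero_of_row_eq_single _ (zeroRowCol_sub_smul_one_row s B z) hts

lemma inv_zeroRowCol_sub_smul_one_apply_right (B : Matrix n n K) (z : K) {s t : n}
    (hts : t ≠ s) : (zeroRowCol s B - z • 1)⁻¹ t s = 0 := by
  have h := inv_zeroRowCol_sub_smul_one_apply_left Bᵀ z hts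
  rwa [← transpose_zeroRowCol, ← transpose_one, ← transpose_smul, ← transpose_sub,
    ← transpose_nonsing_inv, transpose_apply] at h

lemma IsHermitian.isUnit_sub_smul_one {𝕜 : Type*} [RCLike 𝕜] {B : Matrix n n 𝕜}
    (hB : B.IsHermitian) {z : 𝕜} (hz : RCLike.im z ≠ 0) : IsUnit (B - z • 1) := by
  have hzσ : z ∉ spectrum 𝕜 B := by
    rw [hB.spectrum_eq_image_range]
    rintro ⟨x, -, rfl⟩
    simp at hz
  rw [spectrum.mem_iff, not_not, Algebra.algebraMap_eq_smul_one, ← neg_sub] at hzσ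
  exact IsUnit.neg_iff _ |>.mp hzσ

lemma inv_sub_smul_one_apply_eq_mul_sum_zeroRowCol (B : Matrix n n K) (z : K) {s t : n}
    (hst : s ≠ t)
    (hunit : IsUnit (B - z • 1) ↔ IsUnit (zeroRowCol s B - z • 1)) :
    (B - z • 1)⁻¹ s t =
      -(B - z • 1)⁻¹ s s *
        ∑ b ∈ univ.erase s, B s b * (zeroRowCol s B - z • 1)⁻¹ b t := by
  set G := (B - z • 1)⁻¹
  set Gs := (zeroRowCol s B - z • 1)⁻¹
  have hGs : Gs s t = 0 := inv_zeroRowCol_sub_smul_one_apply_left B z hst.symm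
  have hres : G - Gs = G * ((zeroRowCol s B - B) * Gs) := by
    rw [inv_sub_inv hunit, sub_sub_sub_cancel_right, Matrix.mul_assoc]
  have hDGs : ∀ a, ((zeroRowCol s B - B) * Gs) a t =
      if a = s then -∑ b ∈ univ.erase s, B s b * Gs b t else 0 := by
    intro a
    rw [mul_apply, ← add_sum_erase _ _ (mem_univ s), hGs, mul_zero, zero_add]
    split_ifs with ha
    · simp [ha, sum_neg_distrib]
    · refine sum_eq_zero fun b hb => ?_
      simp [ha, ne_of_mem_erase hb]
  calc G s t = (G - Gs) s t := by rw [sub_apply, hGs, sub_zero]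
    _ = ∑ a, G s a * ((zeroRowCol s B - B) * Gs) a t := by rw [hres, mul_apply]
    _ = _ := by
      rw [sum_eq_single s (fun a _ ha => by rw [hDGs, if_neg ha, mul_zero]) (by simp), hDGs,
        if_pos rfl, neg_mul_comm]

lemma inv_sub_smul_one_apply_eq_mul_sum_zeroRowCol' (B : Matrix n n K) (z : K) {s t : n}
    (hst : s ≠ t)
    (hunit : IsUnit (B - z • 1) ↔ IsUnit (zeroRowCol s B - z • 1)) :
    (B - z • 1)⁻¹ t s =
      -(B - z • 1)⁻¹ s s *
        ∑ b ∈ univ.erase s, (zeroRowCol s B - z • 1)⁻¹ t b * B b s := by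
  have htr : ∀ M : Matrix n n K, (M - z • 1)ᵀ = Mᵀ - z • 1 := fun M => by
    rw [transpose_sub, transpose_smul, transpose_one]
  have h := inv_sub_smul_one_apply_eq_mul_sum_zeroRowCol Bᵀ z hst (by
    rwa [← transpose_zeroRowCol, ← htr, ← htr, isUnit_transpose, isUnit_transpose])
  simp only [← transpose_zeroRowCol, ← htr, ← transpose_nonsing_inv, transpose_apply] at h
  simpa only [mul_comm (B _ s)] using h

lemma inv_sub_smul_one_apply_eq_mul_mul_zeroRowCol_zeroRowCol (A : Matrix n n K) (z : K)
    {i j : n} (hij : i ≠ j)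
    (hunit_i : IsUnit (A - z • 1) ↔ IsUnit (zeroRowCol i A - z • 1))
    (hunit_ij : IsUnit (zeroRowCol i A - z • 1) ↔
      IsUnit (zeroRowCol j (zeroRowCol i A) - z • 1)) :
    (A - z • 1)⁻¹ i j = -(A - z • 1)⁻¹ i i * (zeroRowCol i A - z • 1)⁻¹ j j *
      (A i j - ∑ k ∈ univ \ {i, j}, ∑ l ∈ univ \ {i, j},
        A i k * (zeroRowCol i (zeroRowCol j A) - z • 1)⁻¹ k l * A l j) := by
  have hS : univ \ {i, j} = (univ.erase i).erase j := by
    rw [sdiff_insert, sdiff_singleton_eq_erase, erase_right_comm]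
  have hS' : univ \ {i, j} = (univ.erase j).erase i := by
    rw [sdiff_insert, sdiff_singleton_eq_erase]
  have hcol : ∀ k ∈ univ \ {i, j}, (zeroRowCol i A - z • 1)⁻¹ k j =
      -(zeroRowCol i A - z • 1)⁻¹ j j *
        ∑ l ∈ univ \ {i, j}, (zeroRowCol i (zeroRowCol j A) - z • 1)⁻¹ k l * A l j := by
    intro k hk
    have hkj : k ≠ j := by simp_all
    rw [inv_sub_smul_one_apply_eq_mul_sum_zeroRowCol' _ z hkj.symm hunit_ij, zeroRowCol_comm,
      ← sum_erase (univ.erase j) (a := i), ← hS']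
    · congr 1
      refine sum_congr rfl fun l hl => ?_
      obtain ⟨hli, -⟩ : l ≠ i ∧ l ≠ j := by simpa using hl
      simp [hli, hij.symm]
    · simp
  have hrow : ∑ k ∈ univ.erase i, A i k * (zeroRowCol i A - z • 1)⁻¹ k j =
      A i j * (zeroRowCol i A - z • 1)⁻¹ j j +
        ∑ k ∈ univ \ {i, j}, A i k * (zeroRowCol i A - z • 1)⁻¹ k j := by
    rw [hS]
    exact (add_sum_erase _ _ (mem_erase.mpr ⟨hij.symm, mem_univ j⟩)).symm
  have hinner : ∑ k ∈ univ \ {i, j}, A i k * (zeroRowCol i A - z • 1)⁻¹ k j =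
      -(zeroRowCol i A - z • 1)⁻¹ j j * ∑ k ∈ univ \ {i, j}, ∑ l ∈ univ \ {i, j},
        A i k * (zeroRowCol i (zeroRowCol j A) - z • 1)⁻¹ k l * A l j := by
    rw [mul_sum]
    refine sum_congr rfl fun k hk => ?_
    rw [hcol k hk, mul_sum, mul_sum, mul_sum]
    exact sum_congr rfl fun l _ => by ring
  rw [inv_sub_smul_one_apply_eq_mul_sum_zeroRowCol A z hij hunit_i, hrow, hinner]
  ring

end Matrix

theorem stmt_12_general (N : ℕ) (A : Matrix (Fin N) (Fin N) ℂ)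
    (hA : A.IsHermitian) (z : ℂ) (hz : 0 < z.im) (i j : Fin N) (hij : i ≠ j) :
    let G := (A - z • (1 : Matrix (Fin N) (Fin N) ℂ))⁻¹
    let Ai : Matrix (Fin N) (Fin N) ℂ := fun x y => if x = i ∨ y = i then 0 else A x y
    let Gi := (Ai - z • (1 : Matrix (Fin N) (Fin N) ℂ))⁻¹
    let Aij : Matrix (Fin N) (Fin N) ℂ := fun x y =>
      if x = i ∨ y = i then 0 else if x = j ∨ y = j then 0 else A x y
    let Gij := (Aij - z • (1 : Matrix (Fin N) (Fin N) ℂ))⁻¹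
    G i j = -(G i i) * Gi j j *
      (A i j - ∑ k ∈ Finset.univ \ {i, j}, ∑ l ∈ Finset.univ \ {i, j},
        A i k * Gij k l * A l j) := by
  intro G Ai Gi Aij Gij
  have hunit {B : Matrix (Fin N) (Fin N) ℂ} (hB : B.IsHermitian) : IsUnit (B - z • 1) :=
    hB.isUnit_sub_smul_one hz.ne'
  have hAi := hA.zeroRowCol i
  exact Matrix.inv_sub_smul_one_apply_eq_mul_mul_zeroRowCol_zeroRowCol A z hij
    (iff_of_true (hunit hA) (hunit hAi)) (iff_of_true (hunit hAi) (hunit (hAi.zeroRowCol j)))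

/-- With `G = (A − zI)⁻¹`, `G⁽ⁱ⁾ = (π_i(A) − zI)⁻¹` and
`G⁽ⁱʲ⁾ = (π_i(π_j(A)) − zI)⁻¹`, for `i ≠ j`,
`G_{ij} = −G_{ii} G⁽ⁱ⁾_{jj} (A_{ij} − ∑_{k,l∉{i,j}} A_{ik} G⁽ⁱʲ⁾_{kl} A_{lj})`. -/
theorem stmt_12 (N : ℕ) (hN : 0 < N) (A : Matrix (Fin N) (Fin N) ℂ)
    (hA : A.IsHermitian) (z : ℂ) (hz : 0 < z.im) (i j : Fin N) (hij : i ≠ j) :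
    let G := (A - z • (1 : Matrix (Fin N) (Fin N) ℂ))⁻¹
    let Ai : Matrix (Fin N) (Fin N) ℂ := fun x y => if x = i ∨ y = i then 0 else A x y
    let Gi := (Ai - z • (1 : Matrix (Fin N) (Fin N) ℂ))⁻¹
    let Aij : Matrix (Fin N) (Fin N) ℂ := fun x y =>
      if x = i ∨ y = i then 0 else if x = j ∨ y = j then 0 else A x y
    let Gij := (Aij - z • (1 : Matrix (Fin N) (Fin N) ℂ))⁻¹
    G i j = -(G i i) * Gi j j *
      (A i j - ∑ k ∈ Finset.univ \ {i, j}, ∑ l ∈ Finset.univ \ {i, j},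
        A i k * Gij k l * A l j) :=
  stmt_12_general N A hA z hz i j hij
end
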